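/- If a two-variable quaternionic slice regular polynomial P vanishes at a point (a,b) with ab = ba, then for every Q ∈ ℍ[q₁,q₂] the *-product P * Q also vanishes at (a,b). -/

import Mathlib

/-- Two-variable quaternionic polynomials `Σ q₁ⁿ q₂ᵐ a_{n,m}`, encoded as polynomials in `q₁`
whose coefficients are polynomials in `q₂`; polynomial multiplication is exactly the
double-convolution `*`-product. -/
abbrev Poly2 : Type := Polynomial (Polynomial (Quaternion ℝ))

/-- Evaluation of a one-variable quaternionic polynomial `Σ qⁿ aₙ` at `q`. -/
noncomputable def qeval (f : Polynomial (Quaternion ℝ)) (q : Quaternion ℝ) : Quaternion ℝ :=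
  f.sum fun n a => q ^ n * a

/-- Evaluation of `P = Σ q₁ⁿ q₂ᵐ a_{n,m}` at a point `(a,b)`:  `Σ aⁿ bᵐ a_{n,m}`. -/
noncomputable def evalPair (P : Poly2) (a b : Quaternion ℝ) : Quaternion ℝ :=
  P.sum fun n p => a ^ n * qeval p b

/-- Regular conjugate of a one-variable quaternionic polynomial. -/
noncomputable def qconj (f : Polynomial (Quaternion ℝ)) : Polynomial (Quaternion ℝ) :=
  ∑ n ∈ f.support, Polynomial.monomial n (star (f.coeff n))

/-- Regular conjugate `P^c` of a two-variable quaternionic polynomial. -/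
noncomputable def conj2 (P : Poly2) : Poly2 :=
  ∑ n ∈ P.support, Polynomial.monomial n (qconj (P.coeff n))

/-- Symmetrization `P^s = P * P^c` of a two-variable quaternionic polynomial. -/
noncomputable def sym2 (P : Poly2) : Poly2 := P * conj2 P

/-!
`P * Q` is a sum of products `P * q₁ⁿ q₂ᵐ c`. Evaluating such a product at `(a, b)` gives
`Σ aᵏ⁺ⁿ bˡ⁺ᵐ p_{k,l} c`, and because `a` and `b` commute, `aᵏ⁺ⁿ bˡ⁺ᵐ = aⁿ bᵐ aᵏ bˡ`; hence the
value is `aⁿ bᵐ P(a, b) c`, which vanishes with `P(a, b)`.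
-/

open Polynomial

lemma qeval_add (p q : Polynomial (Quaternion ℝ)) (b : Quaternion ℝ) :
    qeval (p + q) b = qeval p b + qeval q b :=
  sum_add_index _ _ _ (fun _ => mul_zero _) fun _ _ _ => mul_add _ _ _

lemma qeval_monomial (n : ℕ) (c b : Quaternion ℝ) : qeval (monomial n c) b = b ^ n * c :=
  sum_monomial_index _ _ (mul_zero _)

lemma qeval_mul_monomial (p : Polynomial (Quaternion ℝ)) (m : ℕ) (c b : Quaternion ℝ) :
    qeval (p * monomial m c) b = b ^ m * qeval p b * c := by
  induction p using Polynomial.induction_on' with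
  | add p q hp hq => rw [add_mul, qeval_add, hp, hq, qeval_add, mul_add, add_mul]
  | monomial l d =>
    rw [monomial_mul_monomial, qeval_monomial, qeval_monomial, add_comm, pow_add]
    simp only [mul_assoc]

lemma evalPair_add (P Q : Poly2) (a b : Quaternion ℝ) :
    evalPair (P + Q) a b = evalPair P a b + evalPair Q a b :=
  sum_add_index _ _ _ (fun _ => by rw [qeval, sum_zero_index, mul_zero])
    fun _ _ _ => by rw [qeval_add, mul_add]

lemma evalPair_monomial (n : ℕ) (p : Polynomial (Quaternion ℝ)) (a b : Quaternion ℝ) :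
    evalPair (monomial n p) a b = a ^ n * qeval p b :=
  sum_monomial_index _ _ (by rw [qeval, sum_zero_index, mul_zero])

lemma evalPair_mul_monomial_monomial {a b : Quaternion ℝ} (hab : Commute a b) (P : Poly2)
    (n m : ℕ) (c : Quaternion ℝ) :
    evalPair (P * monomial n (monomial m c)) a b = a ^ n * b ^ m * evalPair P a b * c := by
  induction P using Polynomial.induction_on' with
  | add P Q hP hQ => rw [add_mul, evalPair_add, hP, hQ, evalPair_add, mul_add, add_mul]
  | monomial k p =>
    rw [monomial_mul_monomial, evalPair_monomial, evalPair_monomial, qeval_mul_monomial,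
      add_comm, pow_add]
    calc a ^ n * a ^ k * (b ^ m * qeval p b * c)
        = a ^ n * (a ^ k * b ^ m) * qeval p b * c := by simp only [mul_assoc]
      _ = a ^ n * b ^ m * (a ^ k * qeval p b) * c := by
        rw [(hab.pow_pow k m).eq]; simp only [mul_assoc]

theorem zero_at_commuting_pair_preserved_by_right_mul (P Q : Poly2) (a b : Quaternion ℝ)
    (hab : a * b = b * a) (hP : evalPair P a b = 0) :
    evalPair (P * Q) a b = 0 := by
  induction Q using Polynomial.induction_on' with
  | add Q R hQ hR => rw [mul_add, evalPair_add, hQ, hR, add_zero]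
  | monomial n q =>
    induction q using Polynomial.induction_on' with
    | add q r hq hr => rw [map_add, mul_add, evalPair_add, hq, hr, add_zero]
    | monomial m c => rw [evalPair_mul_monomial_monomial hab, hP, mul_zero, zero_mul]
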